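/- arXiv:1210.3932 — 2 statements merged into one kernel-verified Lean document; each statement's English description precedes it below -/
import Mathlib

section
/- Let f : [a,b] → ℝ be càdlàg with T_D^c f ≥ T_U^c f, where T_U^c f = inf{s ≥ a : f(s) − inf_{t∈[a,s]} f(t) ≥ c} and T_D^c f = inf{s ≥ a : sup_{t∈[a,s]} f(t) − f(s) ≥ c}. Then UTV^c(f,[a,s]) = 0 for all s ∈ [a, T_U^c f) ∩ [a,b]. -/
open Set Filter

/-- A finite partition `t 0 < t 1 < ... < t n` of points in `[a, b]`. -/
def IsPart (a b : ℝ) (n : ℕ) (t : ℕ → ℝ) : Prop :=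
  a ≤ t 0 ∧ t n ≤ b ∧ ∀ i < n, t i < t (i + 1)

/-- Total variation of `f` on `[a, b]`. -/
noncomputable def TVar {E : Type*} [PseudoMetricSpace E] (f : ℝ → E) (a b : ℝ) : ENNReal :=
  ⨆ (n : ℕ) (t : ℕ → ℝ) (_ : IsPart a b n t),
    ∑ i ∈ Finset.range n, ENNReal.ofReal (dist (f (t (i + 1))) (f (t i)))

/-- Truncated variation of `f` at level `c` on `[a, b]`. -/
noncomputable def TVc {E : Type*} [PseudoMetricSpace E] (f : ℝ → E) (c a b : ℝ) : ENNReal :=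
  ⨆ (n : ℕ) (t : ℕ → ℝ) (_ : IsPart a b n t),
    ∑ i ∈ Finset.range n, ENNReal.ofReal (dist (f (t (i + 1))) (f (t i)) - c)

/-- Upward truncated variation. -/
noncomputable def UTVc (f : ℝ → ℝ) (c a b : ℝ) : ENNReal :=
  ⨆ (n : ℕ) (t : ℕ → ℝ) (_ : IsPart a b n t),
    ∑ i ∈ Finset.range n, ENNReal.ofReal (f (t (i + 1)) - f (t i) - c)

/-- Downward truncated variation. -/
noncomputable def DTVc (f : ℝ → ℝ) (c a b : ℝ) : ENNReal :=
  ⨆ (n : ℕ) (t : ℕ → ℝ) (_ : IsPart a b n t),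
    ∑ i ∈ Finset.range n, ENNReal.ofReal (f (t i) - f (t (i + 1)) - c)

/-- `f` is càdlàg on `[a, b]`: right-continuous on `[a, b)`, with left limits on `(a, b]`. -/
def Cadlag {E : Type*} [TopologicalSpace E] (f : ℝ → E) (a b : ℝ) : Prop :=
  (∀ t ∈ Set.Ico a b, Tendsto f (nhdsWithin t (Set.Ioi t)) (nhds (f t))) ∧
  (∀ t ∈ Set.Ioc a b, ∃ l, Tendsto f (nhdsWithin t (Set.Iio t)) (nhds l))

/-!
Before the first upward crossing time `T_U^c f`, every point `y` satisfies
`f y - inf_{[a,y]} f < c`, so no increment `f y - f x` with `a ≤ x < y` can reach `c`, and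
every summand in the definition of `UTV^c` vanishes. The infimum is the genuine one, not
the junk value of `sInf` on an unbounded set, because a càdlàg function on a compact
interval is bounded: it is locally bounded at each point by its one-sided limits.
-/

open Topology

lemma IsCompact.bddBelow_image_of_isBoundedUnder {X α : Type*} [TopologicalSpace X]
    [Preorder α] [IsCodirectedOrder α] [Nonempty α] {K : Set X} {f : X → α}
    (hK : IsCompact K) (hf : ∀ x ∈ K, IsBoundedUnder (· ≥ ·) (𝓝[K] x) f) :
    BddBelow (f '' K) := by
  refine hK.induction_on (p := fun s => BddBelow (f '' s)) (by simp)
    (fun s t hst ht => ht.mono (image_mono hst))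
    (fun s t hs ht => by rw [image_union]; exact hs.union ht) fun x hx => ?_
  obtain ⟨s, hs, hKs⟩ := isBoundedUnder_iff_eventually_bddBelow.1 (hf x hx)
  exact ⟨s, hKs, hs⟩

namespace Cadlag

variable {E : Type*} [TopologicalSpace E] {f : ℝ → E} {a b x : ℝ}

lemma continuousWithinAt_Icc (hf : Cadlag f a b) (hx : x ∈ Icc a b) :
    ContinuousWithinAt f (Icc x b) x := by
  rcases hx.2.eq_or_lt with rfl | hxb
  · simp
  · exact (continuousWithinAt_Ioi_iff_Ici.1 (hf.1 x ⟨hx.1, hxb⟩)).mono Icc_subset_Ici_self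

lemma exists_tendsto_Ico (hf : Cadlag f a b) (hx : x ∈ Icc a b) :
    ∃ l, Tendsto f (𝓝[Ico a x] x) (𝓝 l) := by
  rcases hx.1.eq_or_lt with rfl | hax
  · exact ⟨f a, by simp⟩
  · obtain ⟨l, hl⟩ := hf.2 x ⟨hax, hx.2⟩
    exact ⟨l, hl.mono_left (nhdsWithin_mono x Ico_subset_Iio_self)⟩

lemma isBoundedUnder_ge [LinearOrder E] [OrderTopology E] (hf : Cadlag f a b)
    (hx : x ∈ Icc a b) : IsBoundedUnder (· ≥ ·) (𝓝[Icc a b] x) f := by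
  obtain ⟨l, hl⟩ := hf.exists_tendsto_Ico hx
  rw [← Ico_union_Icc_eq_Icc hx.1 hx.2, nhdsWithin_union, IsBoundedUnder, map_sup]
  exact isBounded_sup hl.isBoundedUnder_ge (hf.continuousWithinAt_Icc hx).isBoundedUnder_ge

lemma bddBelow_image_Icc [LinearOrder E] [OrderTopology E] [Nonempty E]
    (hf : Cadlag f a b) : BddBelow (f '' Icc a b) :=
  isCompact_Icc.bddBelow_image_of_isBoundedUnder fun _ hx => hf.isBoundedUnder_ge hx

end Cadlag

namespace IsPart

variable {a b : ℝ} {n : ℕ} {t : ℕ → ℝ}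

lemma strictMonoOn (ht : IsPart a b n t) : StrictMonoOn t (Iic n) :=
  strictMonoOn_Iic_of_lt_succ ht.2.2

lemma mem_Icc (ht : IsPart a b n t) {i : ℕ} (hi : i ≤ n) : t i ∈ Icc a b :=
  ⟨ht.1.trans (ht.strictMonoOn.monotoneOn (Nat.zero_le n) hi (Nat.zero_le i)),
    (ht.strictMonoOn.monotoneOn hi self_mem_Iic hi).trans ht.2.1⟩

end IsPart

lemma UTVc_eq_zero_of_forall_sub_le {f : ℝ → ℝ} {c a b : ℝ}
    (h : ∀ x ∈ Icc a b, ∀ y ∈ Icc a b, x < y → f y - f x ≤ c) : UTVc f c a b = 0 := by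
  simp only [UTVc, ENNReal.iSup_eq_zero]
  intro n t ht
  refine Finset.sum_eq_zero fun i hi => ENNReal.ofReal_eq_zero.2 ?_
  have hin := Finset.mem_range.1 hi
  exact sub_nonpos.2 (h _ (ht.mem_Icc hin.le) _ (ht.mem_Icc hin) (ht.2.2 i hin))

theorem utvc_zero_before_first_upcrossing_general (a b : ℝ) (f : ℝ → ℝ)
    (hf : Cadlag f a b) (c : ℝ) :
    ∀ s ∈ Set.Icc a b,
      (∀ u ∈ {r ∈ Set.Icc a b | c ≤ f r - sInf (f '' Set.Icc a r)}, s < u) →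
      UTVc f c a s = 0 := by
  intro s hs hbefore
  refine UTVc_eq_zero_of_forall_sub_le fun x hx y hy hxy => ?_
  have hyb : y ∈ Icc a b := ⟨hy.1, hy.2.trans hs.2⟩
  have hinf : sInf (f '' Icc a y) ≤ f x :=
    csInf_le (hf.bddBelow_image_Icc.mono (image_mono (Icc_subset_Icc_right hyb.2)))
      (mem_image_of_mem f ⟨hx.1, hxy.le⟩)
  by_contra! hup
  exact (hbefore y ⟨hyb, by linarith⟩).not_ge hy.2

/-- If the first downward crossing of size `c` occurs no earlier than the
first upward crossing (every downward-crossing point is preceded by an upward-crossing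
point), then `UTV^c(f,[a,s]) = 0` for every `s` before the first upward crossing. -/
theorem utvc_zero_before_first_upcrossing (a b : ℝ) (hab : a < b) (f : ℝ → ℝ)
    (hf : Cadlag f a b) (c : ℝ) (hc : 0 < c)
    (hUD : ∀ s ∈ {r ∈ Set.Icc a b | c ≤ sSup (f '' Set.Icc a r) - f r},
      ∃ u ∈ {r ∈ Set.Icc a b | c ≤ f r - sInf (f '' Set.Icc a r)}, u ≤ s) :
    ∀ s ∈ Set.Icc a b,
      (∀ u ∈ {r ∈ Set.Icc a b | c ≤ f r - sInf (f '' Set.Icc a r)}, s < u) →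
      UTVc f c a s = 0 :=
  utvc_zero_before_first_upcrossing_general a b f hf c
end

section
/- If f : [a,b] → ℝ is càdlàg and c ≤ sup_{s,u∈[a,b]} |f(s) − f(u)|, then there is a unique function g : [a,b] → ℝ with ‖g − f‖_∞ ≤ c/2 and TV(g,[a,s]) = TV^c(f,[a,s]) for every s ∈ (a,b]. -/
/-!
Write `V s = TV^c(f, [a, s])`. Superadditivity of `V` gives `|f u - f s| - c ≤ |V u - V s|`, and
every solution `g` satisfies `|g t - g s| ≤ |V t - V s|`. Hence
`g⁺ t = sup_u (f u - c/2 - |V u - V t|)` stays within `c/2` of `f` and has `TV(g⁺, [a, s]) ≤ V s`,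
whereas `TV(g, [a, s]) ≥ V s` for every `g` in the `c/2`-band, so `g⁺` is a solution; and every
solution lies between `g⁺` and `t ↦ inf_v (f v + c/2 + |V v - V t|)`.

Uniqueness therefore amounts to these two envelopes meeting. For a finite sequence whose
oscillation is at least `c`, this follows by induction on its length from the dynamic-programming
recursion for its truncated variation. A càdlàg `f` is uniformly close to its values on a fine
finite partition, and the truncated variations are then close too: fix a partition into `K`
pieces on each of which `f` oscillates by at most `c`; only increments between different pieces
count, so every chain incurs the discretization error at most `K` times.
-/

open Set Filter

open Topology

section Partition

variable {a b : ℝ} {n : ℕ} {t : ℕ → ℝ}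

lemma IsPart.monotoneOn (ht : IsPart a b n t) : MonotoneOn t (Iic n) :=
  (strictMonoOn_Iic_of_lt_succ fun m hm => ht.2.2 m hm).monotoneOn

lemma IsPart.mem_Icc_s19 (ht : IsPart a b n t) {i : ℕ} (hi : i ≤ n) : t i ∈ Icc a b :=
  ⟨ht.1.trans (ht.monotoneOn (Nat.zero_le n) hi (Nat.zero_le i)),
    (ht.monotoneOn hi (mem_Iic.2 le_rfl) hi).trans ht.2.1⟩

lemma IsPart.mono_right (ht : IsPart a b n t) {b' : ℝ} (h : b ≤ b') : IsPart a b' n t :=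
  ⟨ht.1, ht.2.1.trans h, ht.2.2⟩

lemma IsPart.update (ht : IsPart a b n t) {z b' : ℝ} (hz : t n < z) (hzb : z ≤ b') :
    IsPart a b' (n + 1) (Function.update t (n + 1) z) := by
  refine ⟨by simpa using ht.1, by simpa using hzb, fun i hi => ?_⟩
  rcases Nat.lt_succ_iff_lt_or_eq.1 hi with hi | rfl
  · simpa [Function.update_of_ne (by omega : i ≠ n + 1),
      Function.update_of_ne (by omega : i + 1 ≠ n + 1)] using ht.2.2 i hi
  · simpa using hz

end Partition

section TruncatedVariation

variable {E : Type*} [PseudoMetricSpace E] {F : ℝ → E} {c a s u : ℝ}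

noncomputable def partSum (F : ℝ → E) (c : ℝ) (n : ℕ) (t : ℕ → ℝ) : ENNReal :=
  ∑ i ∈ Finset.range n, ENNReal.ofReal (dist (F (t (i + 1))) (F (t i)) - c)

lemma partSum_update (F : ℝ → E) (c : ℝ) (n : ℕ) (t : ℕ → ℝ) (z : ℝ) :
    partSum F c (n + 1) (Function.update t (n + 1) z) =
      partSum F c n t + ENNReal.ofReal (dist (F z) (F (t n)) - c) := by
  rw [partSum, Finset.sum_range_succ]
  congr 1
  · refine Finset.sum_congr rfl fun i hi => ?_
    have hi : i < n := Finset.mem_range.1 hi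
    rw [Function.update_of_ne (by omega), Function.update_of_ne (by omega)]
  · simp

lemma partSum_le_TVc {n : ℕ} {t : ℕ → ℝ} (ht : IsPart a s n t) :
    partSum F c n t ≤ TVc F c a s :=
  le_iSup₂_of_le n t (le_iSup_of_le ht le_rfl)

lemma TVc_le {X : ENNReal} (h : ∀ n t, IsPart a s n t → partSum F c n t ≤ X) :
    TVc F c a s ≤ X :=
  iSup₂_le fun n t => iSup_le (h n t)

lemma TVar_eq_TVc_zero (F : ℝ → E) (a s : ℝ) : TVar F a s = TVc F 0 a s := by
  simp [TVar, TVc]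

lemma TVc_mono (F : ℝ → E) (c a : ℝ) {s u : ℝ} (h : s ≤ u) : TVc F c a s ≤ TVc F c a u :=
  TVc_le fun _ _ ht => partSum_le_TVc (ht.mono_right h)

lemma TVc_self (F : ℝ → E) (c a : ℝ) : TVc F c a a = 0 := by
  refine le_antisymm (TVc_le fun n t ht => ?_) bot_le
  obtain rfl : n = 0 := by
    by_contra hn
    have h01 := ht.2.2 0 (by omega)
    have h1n : t 1 ≤ t n := ht.monotoneOn (mem_Iic.2 (by omega)) (mem_Iic.2 le_rfl) (by omega)
    linarith [ht.1, ht.2.1]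
  simp [partSum]

lemma ofReal_dist_sub_le_TVc (F : ℝ → E) (c : ℝ) (has : a ≤ s) (hsu : s < u) :
    ENNReal.ofReal (dist (F u) (F s) - c) ≤ TVc F c a u := by
  have ht : IsPart a s 0 (fun _ => s) := ⟨has, le_rfl, by simp⟩
  simpa [partSum] using partSum_le_TVc (F := F) (c := c) (ht.update hsu le_rfl)

lemma TVc_add_le (F : ℝ → E) (hc : 0 ≤ c) (has : a ≤ s) (hsu : s ≤ u) :
    TVc F c a s + ENNReal.ofReal (dist (F u) (F s) - c) ≤ TVc F c a u := by
  rcases hsu.eq_or_lt with rfl | hsu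
  · simp [ENNReal.ofReal_of_nonpos (neg_nonpos.2 hc)]
  have hle := ofReal_dist_sub_le_TVc F c has hsu
  rw [← ENNReal.le_sub_iff_add_le_right ENNReal.ofReal_ne_top hle]
  refine TVc_le fun n t ht => (ENNReal.le_sub_iff_add_le_right ENNReal.ofReal_ne_top hle).2 ?_
  rcases ht.2.1.eq_or_lt with hts | hts
  · rw [← hts, ← partSum_update]
    exact partSum_le_TVc (ht.update (hts ▸ hsu) le_rfl)
  · set t' := Function.update t (n + 1) s
    have ht' : IsPart a s (n + 1) t' := ht.update hts le_rfl
    calc partSum F c n t + ENNReal.ofReal (dist (F u) (F s) - c)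
        ≤ partSum F c (n + 1) t' + ENNReal.ofReal (dist (F u) (F (t' (n + 1))) - c) := by
          rw [partSum_update]; simp [t']
      _ ≤ TVc F c a u := by
          rw [← partSum_update]
          exact partSum_le_TVc (ht'.update (by simpa [t'] using hsu) le_rfl)

lemma TVc_le_TVar_of_dist_le {G : ℝ → E} (h : ∀ t ∈ Icc a s, dist (G t) (F t) ≤ c / 2) :
    TVc F c a s ≤ TVar G a s := by
  rw [TVar_eq_TVc_zero]
  refine TVc_le fun n t ht => le_trans ?_ (partSum_le_TVc ht)
  refine Finset.sum_le_sum fun i hi => ENNReal.ofReal_le_ofReal ?_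
  have hi := Finset.mem_range.1 hi
  linarith [dist_triangle4 (F (t (i + 1))) (G (t (i + 1))) (G (t i)) (F (t i)),
    h _ (ht.mem_Icc_s19 (Nat.succ_le_of_lt hi)), h _ (ht.mem_Icc_s19 hi.le),
    dist_comm (F (t (i + 1))) (G (t (i + 1)))]

end TruncatedVariation

section Oscillation

variable {E : Type*} [PseudoMetricSpace E]

structure OscPartition (F : ℝ → E) (ε a b : ℝ) where
  K : ℕ
  r : ℕ → ℝ
  r_zero : r 0 = a
  r_K : r K = b
  r_lt_succ : ∀ i < K, r i < r (i + 1)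
  dist_le : ∀ i < K, ∀ u ∈ Ico (r i) (r (i + 1)), ∀ v ∈ Ico (r i) (r (i + 1)), dist (F u) (F v) ≤ ε

namespace OscPartition

variable {F : ℝ → E} {ε a b : ℝ} (P : OscPartition F ε a b)

lemma isPart : IsPart a b P.K P.r :=
  ⟨P.r_zero.ge, P.r_K.le, P.r_lt_succ⟩

lemma r_mem_Icc {i : ℕ} (hi : i ≤ P.K) : P.r i ∈ Icc a b :=
  P.isPart.mem_Icc_s19 hi

def empty (F : ℝ → E) (ε a : ℝ) : OscPartition F ε a a :=
  ⟨0, fun _ => a, rfl, rfl, by simp, by simp⟩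

def extend {b' : ℝ} (hbb' : b < b')
    (hosc : ∀ u ∈ Ico b b', ∀ v ∈ Ico b b', dist (F u) (F v) ≤ ε) : OscPartition F ε a b' where
  K := P.K + 1
  r := Function.update P.r (P.K + 1) b'
  r_zero := by simpa using P.r_zero
  r_K := by simp
  r_lt_succ := (P.isPart.update (by rwa [P.r_K]) le_rfl).2.2
  dist_le i hi := by
    rcases Nat.lt_succ_iff_lt_or_eq.1 hi with hi | rfl
    · rw [Function.update_of_ne (by omega), Function.update_of_ne (by omega)]
      exact P.dist_le i hi
    · simpa [P.r_K] using hosc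

/-- The index of the piece `[r i, r (i + 1))` containing `u`. -/
noncomputable def idx (u : ℝ) : ℕ :=
  Nat.findGreatest (fun i => P.r i ≤ u) P.K

lemma idx_le (u : ℝ) : P.idx u ≤ P.K :=
  Nat.findGreatest_le _

lemma r_idx_le {u : ℝ} (hu : a ≤ u) : P.r (P.idx u) ≤ u := by
  rcases Nat.eq_zero_or_pos (P.idx u) with h | h
  · rwa [h, P.r_zero]
  · exact Nat.findGreatest_of_ne_zero rfl h.ne'

lemma idx_mono {u v : ℝ} (huv : u ≤ v) : P.idx u ≤ P.idx v :=
  Nat.findGreatest_mono (fun _ hi => le_trans hi huv) le_rfl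

lemma idx_r {i : ℕ} (hi : i ≤ P.K) : P.idx (P.r i) = i := by
  refine le_antisymm ?_ (Nat.le_findGreatest hi le_rfl)
  by_contra! h
  have hle : P.r (P.idx (P.r i)) ≤ P.r i := Nat.findGreatest_of_ne_zero rfl
    (show P.idx (P.r i) ≠ 0 by omega)
  have hlt := (strictMonoOn_Iic_of_lt_succ P.r_lt_succ) hi (mem_Iic.2 (P.idx_le _)) h
  linarith

lemma idx_right : P.idx b = P.K := by
  simpa [P.r_K] using P.idx_r le_rfl

lemma idx_lt {u : ℝ} (hu : a ≤ u) (hub : u < b) : P.idx u < P.K ∧ u < P.r (P.idx u + 1) := by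
  have hK : P.idx u < P.K := by
    refine (P.idx_le u).lt_of_ne fun h => ?_
    have := P.r_idx_le hu
    rw [h, P.r_K] at this
    linarith
  exact ⟨hK, not_le.1 (Nat.findGreatest_is_greatest (P := fun i => P.r i ≤ u)
    (Nat.lt_succ_self _) hK)⟩

lemma dist_r_idx_le (hε : 0 ≤ ε) {u : ℝ} (hu : u ∈ Icc a b) :
    dist (F u) (F (P.r (P.idx u))) ≤ ε := by
  rcases hu.2.eq_or_lt with rfl | hub
  · simpa [P.idx_right, P.r_K] using hε
  obtain ⟨hK, hlt⟩ := P.idx_lt hu.1 hub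
  have hle := P.r_idx_le hu.1
  exact P.dist_le _ hK u ⟨hle, hlt⟩ _ ⟨le_rfl, hle.trans_lt hlt⟩

lemma dist_le_of_idx_eq (hε : 0 ≤ ε) {u v : ℝ} (hu : u ∈ Icc a b) (hv : v ∈ Icc a b) (huv : u ≤ v)
    (h : P.idx u = P.idx v) : dist (F u) (F v) ≤ ε := by
  rcases hv.2.eq_or_lt with rfl | hvb
  · rcases hu.2.eq_or_lt with rfl | hub
    · simpa using hε
    · exact absurd (h.trans P.idx_right) (P.idx_lt hu.1 hub).1.ne
  obtain ⟨hK, hlt⟩ := P.idx_lt hv.1 hvb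
  exact P.dist_le _ hK u ⟨h ▸ P.r_idx_le hu.1, huv.trans_lt hlt⟩ v ⟨P.r_idx_le hv.1, hlt⟩

end OscPartition

end Oscillation

section Cadlag

variable {E : Type*} [PseudoMetricSpace E] {F : ℝ → E} {ε a b : ℝ}

lemma exists_Ioo_dist_le_of_tendsto_nhdsLT {y : ℝ} {l : E} (hF : Tendsto F (𝓝[<] y) (𝓝 l))
    (hε : 0 < ε) : ∃ w < y, ∀ u ∈ Ioo w y, ∀ v ∈ Ioo w y, dist (F u) (F v) ≤ ε := by
  obtain ⟨w, hw, hsub⟩ :=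
    mem_nhdsLT_iff_exists_Ioo_subset.1 (hF (Metric.ball_mem_nhds l (half_pos hε)))
  refine ⟨w, hw, fun u hu v hv => ?_⟩
  have hu' : dist (F u) l < ε / 2 := hsub hu
  have hv' : dist (F v) l < ε / 2 := hsub hv
  linarith [dist_triangle_right (F u) (F v) l]

lemma exists_Ico_dist_le_of_tendsto_nhdsGT {y : ℝ} (hF : Tendsto F (𝓝[>] y) (𝓝 (F y)))
    (hε : 0 < ε) : ∃ d > y, ∀ u ∈ Ico y d, ∀ v ∈ Ico y d, dist (F u) (F v) ≤ ε := by
  obtain ⟨d, hd, hsub⟩ :=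
    mem_nhdsGT_iff_exists_Ioo_subset.1 (hF (Metric.ball_mem_nhds (F y) (half_pos hε)))
  have hclose : ∀ u ∈ Ico y d, dist (F u) (F y) < ε / 2 := fun u hu => by
    rcases hu.1.eq_or_lt with rfl | hyu
    · simpa using half_pos hε
    · exact hsub ⟨hyu, hu.2⟩
  refine ⟨d, hd, fun u hu v hv => ?_⟩
  linarith [dist_triangle_right (F u) (F v) (F y), hclose u hu, hclose v hv]

/-- The supremum of the points `y` up to which such a partition exists is attained, by the
existence of the left limit there, and equals `b`, by right-continuity. -/
lemma Cadlag.nonempty_oscPartition (hf : Cadlag F a b) (hab : a < b) (hε : 0 < ε) :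
    Nonempty (OscPartition F ε a b) := by
  set S := {y ∈ Icc a b | Nonempty (OscPartition F ε a y)}
  have haS : a ∈ S := ⟨left_mem_Icc.2 hab.le, ⟨.empty F ε a⟩⟩
  have hbdd : BddAbove S := ⟨b, fun _ hy => hy.1.2⟩
  set y := sSup S
  have hay : a ≤ y := le_csSup hbdd haS
  have hyb : y ≤ b := csSup_le ⟨a, haS⟩ fun _ hz => hz.1.2
  have hyS : y ∈ S := by
    rcases hay.eq_or_lt with h | h
    · exact h ▸ haS
    obtain ⟨l, hl⟩ := hf.2 y ⟨h, hyb⟩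
    obtain ⟨w, hw, hosc⟩ := exists_Ioo_dist_le_of_tendsto_nhdsLT hl hε
    obtain ⟨z, hzS, hz⟩ := exists_lt_of_lt_csSup ⟨a, haS⟩ (max_lt hw h)
    rcases (le_csSup hbdd hzS).eq_or_lt with hzy | hzy
    · rwa [show y = z from hzy.symm]
    obtain ⟨-, ⟨P⟩⟩ := hzS
    have hmem : ∀ u ∈ Ico z y, u ∈ Ioo w y := fun u hu =>
      ⟨(le_max_left w a).trans_lt (hz.trans_le hu.1), hu.2⟩
    exact ⟨⟨hay, hyb⟩, ⟨P.extend hzy fun u hu v hv => hosc u (hmem u hu) v (hmem v hv)⟩⟩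
  obtain ⟨-, ⟨P⟩⟩ := hyS
  rcases hyb.eq_or_lt with hyb | hyb
  · exact ⟨hyb ▸ P⟩
  obtain ⟨d, hd, hosc⟩ := exists_Ico_dist_le_of_tendsto_nhdsGT (hf.1 y ⟨hay, hyb⟩) hε
  have hmem : ∀ u ∈ Ico y (min d b), u ∈ Ico y d := fun u hu =>
    ⟨hu.1, hu.2.trans_le (min_le_left d b)⟩
  have hdS : min d b ∈ S :=
    ⟨⟨hay.trans (lt_min hd hyb).le, min_le_right d b⟩,
      ⟨P.extend (lt_min hd hyb) fun u hu v hv => hosc u (hmem u hu) v (hmem v hv)⟩⟩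
  exact absurd (le_csSup hbdd hdS) (not_le.2 (lt_min hd hyb))

end Cadlag

section Discrete

noncomputable def jump (x : ℕ → ℝ) (c : ℝ) (i j : ℕ) : ℝ := max (|x j - x i| - c) 0

/-- The truncated variation at level `c` of the sequence `x` on `{0, …, n}`, computed by
dynamic programming over the second to last point of an optimal chain. -/
noncomputable def discTV (x : ℕ → ℝ) (c : ℝ) : ℕ → ℝ
  | 0 => 0
  | n + 1 => max (discTV x c n) (⨆ i : Fin (n + 1), discTV x c i + jump x c i (n + 1))

variable {x : ℕ → ℝ} {c d : ℝ}

lemma jump_nonneg (i j : ℕ) : 0 ≤ jump x c i j := le_max_right _ _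

lemma jump_self (hc : 0 ≤ c) (i : ℕ) : jump x c i i = 0 := by
  simp [jump, hc]

lemma jump_eq_of_pos {i j : ℕ} (h : 0 < jump x c i j) : jump x c i j = |x j - x i| - c :=
  max_eq_left (not_lt.1 fun h' => h.ne' (max_eq_right h'.le))

lemma discTV_zero : discTV x c 0 = 0 := by rw [discTV]

lemma discTV_le_succ (n : ℕ) : discTV x c n ≤ discTV x c (n + 1) := by
  rw [discTV]; exact le_max_left _ _

lemma discTV_mono : Monotone (discTV x c) := monotone_nat_of_le_succ discTV_le_succ

lemma discTV_nonneg (n : ℕ) : 0 ≤ discTV x c n :=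
  discTV_zero (x := x) (c := c) ▸ discTV_mono (Nat.zero_le n)

lemma add_jump_le_discTV_succ {i n : ℕ} (hi : i ≤ n) :
    discTV x c i + jump x c i (n + 1) ≤ discTV x c (n + 1) := by
  rw [discTV]
  exact le_max_of_le_right <|
    le_ciSup (f := fun i : Fin (n + 1) => discTV x c i + jump x c i (n + 1))
      (Finite.bddAbove_range _) ⟨i, by omega⟩

lemma add_jump_le_discTV (hc : 0 ≤ c) {i j : ℕ} (hij : i ≤ j) :
    discTV x c i + jump x c i j ≤ discTV x c j := by
  rcases hij.eq_or_lt with rfl | hij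
  · simp [jump_self hc]
  obtain ⟨n, rfl⟩ := Nat.exists_eq_add_of_lt hij
  exact add_jump_le_discTV_succ (by omega)

lemma discTV_succ_cases (n : ℕ) : discTV x c (n + 1) = discTV x c n ∨
    ∃ i ≤ n, discTV x c (n + 1) = discTV x c i + jump x c i (n + 1) := by
  rw [discTV]
  rcases max_choice (discTV x c n) (⨆ i : Fin (n + 1), discTV x c i + jump x c i (n + 1))
    with h | h
  · exact .inl h
  · obtain ⟨i, hi⟩ := exists_eq_ciSup_of_finite
      (f := fun i : Fin (n + 1) => discTV x c i + jump x c i (n + 1))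
    exact .inr ⟨i, by omega, h.trans hi.symm⟩

lemma exists_jump_of_discTV_lt_succ {n : ℕ} (h : discTV x c n < discTV x c (n + 1)) :
    ∃ i ≤ n, discTV x c (n + 1) = discTV x c i + jump x c i (n + 1) ∧ 0 < jump x c i (n + 1) := by
  rcases discTV_succ_cases (x := x) (c := c) n with h' | ⟨i, hi, hD⟩
  · exact absurd h' h.ne'
  · refine ⟨i, hi, hD, ?_⟩
    linarith [discTV_mono (x := x) (c := c) hi]

lemma sum_jump_le_discTV (hc : 0 ≤ c) (p : ℕ → ℕ) :
    ∀ n, (∀ i < n, p i ≤ p (i + 1)) →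
      ∑ i ∈ Finset.range n, jump x c (p i) (p (i + 1)) ≤ discTV x c (p n)
  | 0, _ => by simpa using discTV_nonneg (p 0)
  | n + 1, hp => by
    rw [Finset.sum_range_succ]
    linarith [sum_jump_le_discTV hc p n fun i hi => hp i (by omega),
      add_jump_le_discTV (x := x) hc (hp n (by omega))]

lemma discTV_eq_zero {N : ℕ} (h : ∀ p ≤ N, ∀ q ≤ N, |x p - x q| ≤ c) :
    ∀ n ≤ N, discTV x c n = 0
  | 0, _ => discTV_zero
  | n + 1, hn => by
    have ih := discTV_eq_zero h n (by omega)
    rcases discTV_succ_cases (x := x) (c := c) n with hD | ⟨i, hi, hD⟩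
    · rw [hD, ih]
    · have hi0 : discTV x c i = 0 :=
        le_antisymm (ih ▸ discTV_mono hi) (discTV_nonneg i)
      have hj : jump x c i (n + 1) = 0 :=
        max_eq_right (by linarith [h (n + 1) hn i (by omega)])
      rw [hD, hi0, hj, add_zero]

/-- For `D = discTV x c`: the constraints `x i - c/2 - |D i - D m| ≤ y ≤ x j + c/2 + |D j - D m|`
(`i, j ≤ K`), which the value `y` at `m` of a `D`-Lipschitz function within `c/2` of `x` must
satisfy, confine `y` to an interval of length at most `c - d`. -/
def Pinned (x D : ℕ → ℝ) (K m : ℕ) (d : ℝ) : Prop :=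
  ∃ i ≤ K, ∃ j ≤ K, d ≤ x i - x j - |D i - D m| - |D j - D m|

lemma Pinned.mono {D : ℕ → ℝ} {K K' m : ℕ} (h : Pinned x D K m d) (hK : K ≤ K') :
    Pinned x D K' m d :=
  let ⟨i, hi, j, hj, hij⟩ := h
  ⟨i, hi.trans hK, j, hj.trans hK, hij⟩

lemma pinned_of_le_abs {D : ℕ → ℝ} {K m p q : ℕ} (hp : p ≤ K) (hq : q ≤ K)
    (h : d ≤ |x p - x q| - |D p - D m| - |D q - D m|) : Pinned x D K m d := by
  rcases abs_cases (x p - x q) with ⟨hpq, -⟩ | ⟨hpq, -⟩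
  · exact ⟨p, hp, q, hq, by linarith⟩
  · exact ⟨q, hq, p, hp, by linarith⟩

lemma pinned_of_jump (hdc : d ≤ c) {i K m : ℕ} (hi : i ≤ K)
    (hD : discTV x c (K + 1) = discTV x c i + jump x c i (K + 1)) (hj : 0 < jump x c i (K + 1))
    (him : discTV x c i ≤ discTV x c m) (hmK : discTV x c m ≤ discTV x c (K + 1)) :
    Pinned x (discTV x c) (K + 1) m d := by
  refine pinned_of_le_abs le_rfl (by omega : i ≤ K + 1) ?_
  rw [abs_of_nonneg (sub_nonneg.2 hmK), abs_of_nonpos (sub_nonpos.2 him)]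
  linarith [jump_eq_of_pos hj]

lemma pinned_succ_of_forall_abs_lt (hdc : d ≤ c) {K m q : ℕ}
    (hpre : ∀ p ≤ K, ∀ q ≤ K, |x p - x q| < d) (hq : q ≤ K) (hdq : d ≤ |x (K + 1) - x q|)
    (hm : m ≤ K + 1) : Pinned x (discTV x c) (K + 1) m d := by
  have hzero : ∀ n ≤ K, discTV x c n = 0 := discTV_eq_zero fun p hp q hq =>
    ((hpre p hp q hq).trans_le hdc).le
  rcases (discTV_nonneg (x := x) (c := c) (K + 1)).eq_or_lt with hD0 | hD0
  · have hm0 : discTV x c m = 0 := le_antisymm (hD0 ▸ discTV_mono hm) (discTV_nonneg m)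
    refine pinned_of_le_abs le_rfl (by omega : q ≤ K + 1) ?_
    rw [← hD0, hm0, hzero q hq]
    simpa using hdq
  · obtain ⟨i, hi, hD, hj⟩ := exists_jump_of_discTV_lt_succ (hzero K le_rfl ▸ hD0)
    exact pinned_of_jump hdc hi hD hj (by rw [hzero i hi]; exact discTV_nonneg m)
      (discTV_mono hm)

/-- Induction on `K`: either `discTV` does not grow at `K + 1`, or it grows by a jump from some
`i ≤ K`, and then the pair `(i, K + 1)` pins at level `c`. -/
theorem discTV_pinned (hdc : d ≤ c) :
    ∀ K, (∃ p ≤ K, ∃ q ≤ K, d ≤ |x p - x q|) → ∀ m ≤ K, Pinned x (discTV x c) K m d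
  | 0, ⟨p, hp, q, hq, hpq⟩, m, hm => by
    obtain rfl : p = 0 := by omega
    obtain rfl : q = 0 := by omega
    obtain rfl : m = 0 := by omega
    exact pinned_of_le_abs hp hq (by simpa using hpq)
  | K + 1, ⟨p, hp, q, hq, hpq⟩, m, hm => by
    by_cases hpre : ∃ p ≤ K, ∃ q ≤ K, d ≤ |x p - x q|
    · have ih := discTV_pinned hdc K hpre
      rcases Nat.lt_succ_iff_lt_or_eq.1 (Nat.lt_succ_of_le hm) with hm | rfl
      · exact (ih m (by omega)).mono K.le_succ
      rcases (discTV_le_succ (x := x) (c := c) K).eq_or_lt with hDK | hDK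
      · obtain ⟨i, hi, j, hj, hij⟩ := ih K le_rfl
        exact ⟨i, by omega, j, by omega, by rwa [← hDK]⟩
      obtain ⟨i, hi, hD, hj⟩ := exists_jump_of_discTV_lt_succ hDK
      exact pinned_of_jump hdc hi hD hj (discTV_mono (by omega)) le_rfl
    push Not at hpre
    rcases le_or_gt d 0 with hd0 | hd0
    · exact pinned_of_le_abs hm hm (by simpa using hd0)
    have hpq' : p = K + 1 ∨ q = K + 1 := by
      by_contra! h
      exact (hpre p (by omega) q (by omega)).not_ge hpq
    rcases hpq' with rfl | rfl
    · have hq : q ≤ K := Nat.le_of_lt_succ <| hq.lt_of_ne fun h => by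
        subst h; simp at hpq; linarith
      exact pinned_succ_of_forall_abs_lt hdc hpre hq hpq hm
    · have hp : p ≤ K := Nat.le_of_lt_succ <| hp.lt_of_ne fun h => by
        subst h; simp at hpq; linarith
      exact pinned_succ_of_forall_abs_lt hdc hpre hp (by rwa [abs_sub_comm]) hm

end Discrete

lemma abs_sub_le_abs_sub_add {p q p' q' e : ℝ} (hp : |p - p'| ≤ e) (hq : |q - q'| ≤ e) :
    |p - q| ≤ |p' - q'| + 2 * e := by
  linarith [abs_sub_le p p' q, abs_sub_le p' q' q, abs_sub_comm q' q]

section TruncVar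

variable {f : ℝ → ℝ} {c a b s u : ℝ}

noncomputable def truncVar (f : ℝ → ℝ) (c a s : ℝ) : ℝ := (TVc f c a s).toReal

lemma truncVar_nonneg : 0 ≤ truncVar f c a s := ENNReal.toReal_nonneg

lemma truncVar_self : truncVar f c a a = 0 := by
  rw [truncVar, TVc_self, ENNReal.toReal_zero]

variable (hfin : TVc f c a b ≠ ⊤)
include hfin

lemma TVc_ne_top_of_le (hsb : s ≤ b) : TVc f c a s ≠ ⊤ :=
  ne_top_of_le_ne_top hfin (TVc_mono f c a hsb)

lemma ofReal_truncVar (hsb : s ≤ b) : ENNReal.ofReal (truncVar f c a s) = TVc f c a s :=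
  ENNReal.ofReal_toReal (TVc_ne_top_of_le hfin hsb)

lemma truncVar_mono (hsu : s ≤ u) (hub : u ≤ b) : truncVar f c a s ≤ truncVar f c a u :=
  ENNReal.toReal_mono (TVc_ne_top_of_le hfin hub) (TVc_mono f c a hsu)

lemma truncVar_add_le (hc : 0 ≤ c) (has : a ≤ s) (hsu : s ≤ u) (hub : u ≤ b) :
    truncVar f c a s + max (|f u - f s| - c) 0 ≤ truncVar f c a u := by
  have h := ENNReal.toReal_mono (TVc_ne_top_of_le hfin hub) (TVc_add_le f hc has hsu)
  rwa [ENNReal.toReal_add (TVc_ne_top_of_le hfin (hsu.trans hub)) ENNReal.ofReal_ne_top,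
    ENNReal.toReal_ofReal', Real.dist_eq] at h

lemma abs_sub_sub_le_abs_truncVar_sub (hc : 0 ≤ c) (hu : u ∈ Icc a b) (hs : s ∈ Icc a b) :
    |f u - f s| - c ≤ |truncVar f c a u - truncVar f c a s| := by
  rcases le_total s u with hsu | hus
  · linarith [truncVar_add_le hfin hc hs.1 hsu hu.2, le_max_left (|f u - f s| - c) 0,
      le_abs_self (truncVar f c a u - truncVar f c a s)]
  · linarith [truncVar_add_le hfin hc hu.1 hus hs.2, le_max_left (|f s - f u| - c) 0,
      abs_sub_comm (f u) (f s), neg_abs_le (truncVar f c a u - truncVar f c a s)]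

lemma discTV_le_truncVar {ε : ℝ} (P : OscPartition f ε a b) (hc : 0 ≤ c) :
    ∀ i ≤ P.K, discTV (f ∘ P.r) c i ≤ truncVar f c a (P.r i)
  | 0, _ => by rw [discTV_zero, P.r_zero, truncVar_self]
  | n + 1, hn => by
    have hr := P.isPart.monotoneOn
    rcases discTV_succ_cases (x := f ∘ P.r) (c := c) n with hD | ⟨i, hi, hD⟩
    · rw [hD]
      exact (discTV_le_truncVar P hc n (by omega)).trans
        (truncVar_mono hfin (hr (by simp; omega) (by simpa using hn) n.le_succ)
          (P.r_mem_Icc hn).2)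
    · rw [hD]
      calc discTV (f ∘ P.r) c i + jump (f ∘ P.r) c i (n + 1)
          ≤ truncVar f c a (P.r i) + max (|f (P.r (n + 1)) - f (P.r i)| - c) 0 :=
            add_le_add_left (discTV_le_truncVar P hc i (by omega)) _
        _ ≤ truncVar f c a (P.r (n + 1)) :=
            truncVar_add_le hfin hc (P.r_mem_Icc (by omega)).1
              (hr (by simp; omega) (by simpa using hn) (by omega)) (P.r_mem_Icc hn).2

end TruncVar

section Discretization

variable {E : Type*} [PseudoMetricSpace E] {F : ℝ → E} {c a s : ℝ}

lemma partSum_le_ofReal_sum {n : ℕ} {t : ℕ → ℝ} {y : ℕ → ℝ}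
    (hy : ∀ i < n, dist (F (t (i + 1))) (F (t i)) - c ≤ y i) (hy0 : ∀ i < n, 0 ≤ y i) :
    partSum F c n t ≤ ENNReal.ofReal (∑ i ∈ Finset.range n, y i) := by
  rw [ENNReal.ofReal_sum_of_nonneg fun i hi => hy0 i (Finset.mem_range.1 hi)]
  exact Finset.sum_le_sum fun i hi => ENNReal.ofReal_le_ofReal (hy i (Finset.mem_range.1 hi))

namespace OscPartition

variable {f : ℝ → ℝ} {ε b : ℝ} (P : OscPartition f ε a b) (Q : OscPartition f c a b)

lemma abs_sub_le_abs_sub_r_idx_add (hε : 0 ≤ ε) {u v : ℝ} (hu : u ∈ Icc a b)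
    (hv : v ∈ Icc a b) :
    |f v - f u| ≤ |f (P.r (P.idx v)) - f (P.r (P.idx u))| + 2 * ε := by
  have hu' := P.dist_r_idx_le hε hu
  have hv' := P.dist_r_idx_le hε hv
  rw [Real.dist_eq] at hu' hv'
  exact abs_sub_le_abs_sub_add hv' hu'

/-- An increment of `f` exceeds `c` only across a piece boundary of `Q`, and there it is at most
`2 ε` more than the corresponding increment of the discretization along `P`. -/
lemma abs_sub_sub_le_jump_add (hc : 0 ≤ c) (hε : 0 ≤ ε) {u v : ℝ} (hu : u ∈ Icc a b)
    (hv : v ∈ Icc a b) (huv : u ≤ v) :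
    |f v - f u| - c ≤
      jump (f ∘ P.r) c (P.idx u) (P.idx v) + 2 * ε * ((Q.idx v : ℝ) - Q.idx u) := by
  have hj := jump_nonneg (x := f ∘ P.r) (c := c) (P.idx u) (P.idx v)
  rcases (Q.idx_mono huv).eq_or_lt with hQ | hQ
  · have := Q.dist_le_of_idx_eq hc hu hv huv hQ
    rw [Real.dist_eq, abs_sub_comm] at this
    rw [hQ, sub_self, mul_zero]
    linarith
  · have h1 : (1 : ℝ) ≤ (Q.idx v : ℝ) - Q.idx u := by
      rw [le_sub_iff_add_le']; exact_mod_cast hQ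
    have := P.abs_sub_le_abs_sub_r_idx_add hε hu hv
    have : |f (P.r (P.idx v)) - f (P.r (P.idx u))| - c ≤ jump (f ∘ P.r) c (P.idx u) (P.idx v) :=
      le_max_left _ _
    nlinarith

lemma TVc_le_ofReal_discTV_add (hc : 0 ≤ c) (hε : 0 ≤ ε) (hs : s ∈ Icc a b) :
    TVc f c a s ≤ ENNReal.ofReal (discTV (f ∘ P.r) c (P.idx s) + 2 * ε * Q.K) := by
  refine TVc_le fun n t ht => ?_
  have hmem : ∀ i ≤ n, t i ∈ Icc a b := fun i hi => Icc_subset_Icc_right hs.2 (ht.mem_Icc_s19 hi)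
  have hmono : ∀ i < n, t i ≤ t (i + 1) := fun i hi => (ht.2.2 i hi).le
  have hQ : ∀ i < n, (0 : ℝ) ≤ 2 * ε * ((Q.idx (t (i + 1)) : ℝ) - Q.idx (t i)) := fun i hi => by
    have : (Q.idx (t i) : ℝ) ≤ Q.idx (t (i + 1)) := by exact_mod_cast Q.idx_mono (hmono i hi)
    nlinarith
  refine (partSum_le_ofReal_sum (y := fun i => jump (f ∘ P.r) c (P.idx (t i)) (P.idx (t (i + 1))) +
    2 * ε * ((Q.idx (t (i + 1)) : ℝ) - Q.idx (t i))) (fun i hi => ?_) fun i hi => ?_).trans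
    (ENNReal.ofReal_le_ofReal ?_)
  · rw [Real.dist_eq]
    exact P.abs_sub_sub_le_jump_add Q hc hε (hmem i (by omega)) (hmem (i + 1) hi) (hmono i hi)
  · exact add_nonneg (jump_nonneg _ _) (hQ i hi)
  rw [Finset.sum_add_distrib, ← Finset.mul_sum, Finset.sum_range_sub (fun i => (Q.idx (t i) : ℝ))]
  have hjumps := sum_jump_le_discTV (x := f ∘ P.r) hc (fun i => P.idx (t i)) n
    fun i hi => P.idx_mono (hmono i hi)
  have hlast := discTV_mono (x := f ∘ P.r) (c := c) (P.idx_mono ht.2.1)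
  have hK : (Q.idx (t n) : ℝ) ≤ Q.K := by exact_mod_cast Q.idx_le _
  have h0 : (0 : ℝ) ≤ Q.idx (t 0) := Nat.cast_nonneg _
  nlinarith

end OscPartition

end Discretization

section Pinning

variable {f : ℝ → ℝ} {c a b : ℝ}

lemma Cadlag.TVc_ne_top (hf : Cadlag f a b) (hab : a < b) (hc : 0 < c) : TVc f c a b ≠ ⊤ := by
  obtain ⟨Q⟩ := hf.nonempty_oscPartition hab hc
  exact ne_top_of_le_ne_top ENNReal.ofReal_ne_top
    (Q.TVc_le_ofReal_discTV_add Q hc.le hc.le (right_mem_Icc.2 hab.le))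

lemma OscPartition.abs_truncVar_sub_discTV_le (hfin : TVc f c a b ≠ ⊤) {ε : ℝ}
    (P : OscPartition f ε a b) (Q : OscPartition f c a b) (hc : 0 ≤ c) (hε : 0 ≤ ε) {s : ℝ}
    (hs : s ∈ Icc a b) :
    |truncVar f c a s - discTV (f ∘ P.r) c (P.idx s)| ≤ 2 * ε * Q.K := by
  have hlow : discTV (f ∘ P.r) c (P.idx s) ≤ truncVar f c a s :=
    (discTV_le_truncVar hfin P hc _ (P.idx_le s)).trans
      (truncVar_mono hfin (P.r_idx_le hs.1) hs.2)
  have hup : truncVar f c a s ≤ discTV (f ∘ P.r) c (P.idx s) + 2 * ε * Q.K := by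
    have := P.TVc_le_ofReal_discTV_add Q hc hε hs
    rw [← ofReal_truncVar hfin hs.2] at this
    have hD := discTV_nonneg (x := f ∘ P.r) (c := c) (P.idx s)
    exact (ENNReal.ofReal_le_ofReal_iff (by positivity)).1 this
  rw [abs_le]
  constructor <;> nlinarith [(Nat.cast_nonneg Q.K : (0 : ℝ) ≤ Q.K)]

/-- Continuous form of `discTV_pinned`: discretize along a partition `P` so fine that the errors
`2 ε Q.K` of `abs_truncVar_sub_discTV_le` are negligible. -/
theorem exists_pinned (hf : Cadlag f a b) (hab : a < b) (hc : 0 < c)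
    (hcosc : c ≤ sSup {x : ℝ | ∃ s ∈ Icc a b, ∃ u ∈ Icc a b, x = |f s - f u|})
    {t : ℝ} (ht : t ∈ Icc a b) {η : ℝ} (hη : 0 < η) :
    ∃ u ∈ Icc a b, ∃ v ∈ Icc a b, c - η ≤ f u - f v -
      |truncVar f c a u - truncVar f c a t| - |truncVar f c a v - truncVar f c a t| := by
  have hfin := hf.TVc_ne_top hab hc
  obtain ⟨Q⟩ := hf.nonempty_oscPartition hab hc
  set ε := η / (8 * Q.K + 3)
  have hε : 0 < ε := by positivity
  have hεη : 8 * ε * Q.K + 3 * ε = η := by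
    simp only [ε]; field_simp
  obtain ⟨P⟩ := hf.nonempty_oscPartition hab hε
  obtain ⟨s, hs, u, hu, hsu⟩ : ∃ s ∈ Icc a b, ∃ u ∈ Icc a b, c - ε < |f s - f u| := by
    have ha := left_mem_Icc.2 hab.le
    obtain ⟨_, ⟨s, hs, u, hu, rfl⟩, h⟩ := exists_lt_of_lt_csSup
      (show {x : ℝ | ∃ s ∈ Icc a b, ∃ u ∈ Icc a b, x = |f s - f u|}.Nonempty from
        ⟨0, a, ha, a, ha, by simp⟩) ((sub_lt_self c hε).trans_le hcosc)
    exact ⟨s, hs, u, hu, h⟩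
  have hosc : c - 3 * ε ≤ |f (P.r (P.idx u)) - f (P.r (P.idx s))| := by
    linarith [P.abs_sub_le_abs_sub_r_idx_add hε.le hs hu, abs_sub_comm (f s) (f u)]
  obtain ⟨i, hi, j, hj, hij⟩ := discTV_pinned (x := f ∘ P.r) (by linarith : c - 3 * ε ≤ c) P.K
    ⟨_, P.idx_le u, _, P.idx_le s, hosc⟩ (P.idx t) (P.idx_le t)
  have herr : ∀ k ≤ P.K, |truncVar f c a (P.r k) - truncVar f c a t| ≤
      |discTV (f ∘ P.r) c k - discTV (f ∘ P.r) c (P.idx t)| + 2 * (2 * ε * Q.K) := fun k hk => by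
    simpa [P.idx_r hk] using abs_sub_le_abs_sub_add
      (P.abs_truncVar_sub_discTV_le hfin Q hc.le hε.le (P.r_mem_Icc hk))
      (P.abs_truncVar_sub_discTV_le hfin Q hc.le hε.le ht)
  refine ⟨P.r i, P.r_mem_Icc hi, P.r j, P.r_mem_Icc hj, ?_⟩
  simp only [Function.comp] at hij
  linarith [herr i hi, herr j hj]

end Pinning

section OptimalApproximation

variable {f g : ℝ → ℝ} {c a b s t : ℝ}

/-- The least function above `f - c / 2` whose increments are bounded by those of the truncated
variation of `f`. -/
noncomputable def optApprox (f : ℝ → ℝ) (c a b t : ℝ) : ℝ :=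
  sSup ((fun u => f u - c / 2 - |truncVar f c a u - truncVar f c a t|) '' Icc a b)

lemma optApprox_le (hab : a ≤ b) {y : ℝ}
    (h : ∀ u ∈ Icc a b, f u - c / 2 - |truncVar f c a u - truncVar f c a t| ≤ y) :
    optApprox f c a b t ≤ y :=
  csSup_le ((nonempty_Icc.2 hab).image _) (forall_mem_image.2 h)

variable (hfin : TVc f c a b ≠ ⊤)
include hfin

lemma abs_sub_le_abs_truncVar_sub_of_TVar_eq
    (hTV : ∀ s ∈ Ioc a b, TVar g a s = TVc f c a s) (hs : s ∈ Icc a b) (ht : t ∈ Icc a b) :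
    |g t - g s| ≤ |truncVar f c a t - truncVar f c a s| := by
  have hTV' : ∀ s ∈ Icc a b, TVc g 0 a s = TVc f c a s := fun s hs => by
    rcases hs.1.eq_or_lt with rfl | has
    · rw [TVc_self, TVc_self]
    · rw [← TVar_eq_TVc_zero, hTV s ⟨has, hs.2⟩]
  wlog hst : s ≤ t generalizing s t
  · rw [abs_sub_comm, abs_sub_comm (truncVar f c a t)]
    exact this ht hs (le_of_not_ge hst)
  have h := TVc_add_le g le_rfl hs.1 hst
  rw [hTV' s hs, hTV' t ht, sub_zero, ← ofReal_truncVar hfin hs.2,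
    ← ofReal_truncVar hfin ht.2, ← ENNReal.ofReal_add truncVar_nonneg dist_nonneg,
    ENNReal.ofReal_le_ofReal_iff truncVar_nonneg, Real.dist_eq] at h
  linarith [le_abs_self (truncVar f c a t - truncVar f c a s)]

lemma optApprox_le_of_TVar_eq (hband : ∀ t ∈ Icc a b, |g t - f t| ≤ c / 2)
    (hTV : ∀ s ∈ Ioc a b, TVar g a s = TVc f c a s) (ht : t ∈ Icc a b) :
    optApprox f c a b t ≤ g t :=
  optApprox_le (ht.1.trans ht.2) fun u hu => by
    linarith [abs_sub_le_abs_truncVar_sub_of_TVar_eq hfin hTV ht hu, le_abs_self (g u - g t),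
      (abs_le.1 (hband u hu)).1]

section

variable (hc : 0 ≤ c)
include hc

lemma le_optApprox (ht : t ∈ Icc a b) {u : ℝ} (hu : u ∈ Icc a b) :
    f u - c / 2 - |truncVar f c a u - truncVar f c a t| ≤ optApprox f c a b t := by
  refine le_csSup ⟨f t + c / 2, forall_mem_image.2 fun v hv => ?_⟩ (mem_image_of_mem _ hu)
  linarith [abs_sub_sub_le_abs_truncVar_sub hfin hc hv ht, le_abs_self (f v - f t)]

lemma abs_optApprox_sub_le (ht : t ∈ Icc a b) : |optApprox f c a b t - f t| ≤ c / 2 := by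
  have hlow := le_optApprox hfin hc ht ht
  have hup : optApprox f c a b t ≤ f t + c / 2 := optApprox_le (ht.1.trans ht.2) fun u hu => by
    linarith [abs_sub_sub_le_abs_truncVar_sub hfin hc hu ht, le_abs_self (f u - f t)]
  rw [sub_self, abs_zero, sub_zero] at hlow
  exact abs_sub_le_iff.2 ⟨by linarith, by linarith⟩

lemma abs_optApprox_sub_le_abs_truncVar_sub (hs : s ∈ Icc a b) (ht : t ∈ Icc a b) :
    |optApprox f c a b t - optApprox f c a b s| ≤ |truncVar f c a t - truncVar f c a s| := by
  have key : ∀ {s t}, s ∈ Icc a b → t ∈ Icc a b →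
      optApprox f c a b t ≤ optApprox f c a b s + |truncVar f c a t - truncVar f c a s| :=
    fun {s t} hs ht => optApprox_le (hs.1.trans hs.2) fun u hu => by
      linarith [le_optApprox hfin hc hs hu,
        abs_sub_le (truncVar f c a u) (truncVar f c a t) (truncVar f c a s)]
  exact abs_sub_le_iff.2 ⟨by linarith [key hs ht], by
    linarith [key ht hs, abs_sub_comm (truncVar f c a t) (truncVar f c a s)]⟩

lemma TVar_optApprox_le (hsb : s ≤ b) : TVar (optApprox f c a b) a s ≤ TVc f c a s := by
  rw [TVar_eq_TVc_zero, ← ofReal_truncVar hfin hsb]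
  refine TVc_le fun n t ht => ?_
  have hmem : ∀ i ≤ n, t i ∈ Icc a b := fun i hi => Icc_subset_Icc_right hsb (ht.mem_Icc_s19 hi)
  have hmono : ∀ i < n, truncVar f c a (t i) ≤ truncVar f c a (t (i + 1)) := fun i hi =>
    truncVar_mono hfin (ht.2.2 i hi).le (hmem (i + 1) hi).2
  refine (partSum_le_ofReal_sum (y := fun i => truncVar f c a (t (i + 1)) - truncVar f c a (t i))
    (fun i hi => ?_) fun i hi => sub_nonneg.2 (hmono i hi)).trans (ENNReal.ofReal_le_ofReal ?_)
  · rw [Real.dist_eq, sub_zero, ← abs_of_nonneg (sub_nonneg.2 (hmono i hi))]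
    exact abs_optApprox_sub_le_abs_truncVar_sub hfin hc (hmem i hi.le) (hmem (i + 1) hi)
  · rw [Finset.sum_range_sub (fun i => truncVar f c a (t i))]
    linarith [truncVar_nonneg (f := f) (c := c) (a := a) (s := t 0),
      truncVar_mono hfin ht.2.1 hsb]

end

end OptimalApproximation

theorem le_optApprox_of_TVar_eq {f g : ℝ → ℝ} {c a b t : ℝ} (hf : Cadlag f a b) (hab : a < b)
    (hc : 0 < c) (hcosc : c ≤ sSup {x : ℝ | ∃ s ∈ Icc a b, ∃ u ∈ Icc a b, x = |f s - f u|})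
    (hband : ∀ t ∈ Icc a b, |g t - f t| ≤ c / 2)
    (hTV : ∀ s ∈ Ioc a b, TVar g a s = TVc f c a s) (ht : t ∈ Icc a b) :
    g t ≤ optApprox f c a b t := by
  have hfin := hf.TVc_ne_top hab hc
  refine le_of_forall_pos_le_add fun η hη => ?_
  obtain ⟨u, hu, v, hv, huv⟩ := exists_pinned hf hab hc hcosc ht hη
  linarith [le_optApprox hfin hc.le ht hu, abs_sub_le_abs_truncVar_sub_of_TVar_eq hfin hTV hv ht,
    le_abs_self (g t - g v), (abs_le.1 (hband v hv)).2,
    abs_sub_comm (truncVar f c a t) (truncVar f c a v)]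

/-- If `c` does not exceed the oscillation of `f` on `[a,b]`, then the
function `g` with `‖g − f‖_∞ ≤ c/2` and `TV(g,[a,s]) = TV^c(f,[a,s])` for all
`s ∈ (a,b]` exists and is unique (as a function on `[a,b]`). -/
theorem optimal_approx_unique (a b : ℝ) (hab : a < b) (f : ℝ → ℝ)
    (hf : Cadlag f a b) (c : ℝ) (hc : 0 < c)
    (hcosc : c ≤ sSup {x : ℝ | ∃ s ∈ Set.Icc a b, ∃ u ∈ Set.Icc a b, x = |f s - f u|}) :
    ∃ g : ℝ → ℝ,
      ((∀ t ∈ Set.Icc a b, |g t - f t| ≤ c / 2) ∧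
        ∀ s ∈ Set.Ioc a b, TVar g a s = TVc f c a s) ∧
      ∀ g' : ℝ → ℝ,
        ((∀ t ∈ Set.Icc a b, |g' t - f t| ≤ c / 2) ∧
          ∀ s ∈ Set.Ioc a b, TVar g' a s = TVc f c a s) →
        ∀ t ∈ Set.Icc a b, g' t = g t := by
  have hfin := hf.TVc_ne_top hab hc
  have hband : ∀ t ∈ Icc a b, |optApprox f c a b t - f t| ≤ c / 2 :=
    fun t ht => abs_optApprox_sub_le hfin hc.le ht
  have hTV : ∀ s ∈ Ioc a b, TVar (optApprox f c a b) a s = TVc f c a s := fun s hs =>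
    le_antisymm (TVar_optApprox_le hfin hc.le hs.2) <| TVc_le_TVar_of_dist_le fun t ht => by
      rw [Real.dist_eq]; exact hband t (Icc_subset_Icc_right hs.2 ht)
  refine ⟨optApprox f c a b, ⟨hband, hTV⟩, fun g ⟨hgband, hgTV⟩ t ht => le_antisymm ?_ ?_⟩
  · exact le_optApprox_of_TVar_eq hf hab hc hcosc hgband hgTV ht
  · exact optApprox_le_of_TVar_eq hfin hgband hgTV ht
end
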